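/- arXiv:1606.03217 — 4 statements merged into one kernel-verified Lean document; each statement's English description precedes it below -/
import Mathlib

section
/- Let S be a finite semigroup satisfying identity (1). Then for every x ∈ S and every n ≥ 1 such that x^n is idempotent, x^{n+1} = x^n. -/
/-!
Put `y = x` viewed in the monoid `WithOne S` and `e = y ^ n`. Then
`e * y * e * y * e = y ^ (3n + 2)`, whose `n`-th power is `y ^ (n(3n + 2)) = e` because `e` is
idempotent. Identity (1) with `s = t = x` therefore gives `e * y * e = e`, and
`y ^ (n + 1) = y * e * e = e * y * e = e`.
-/

/-- `spow s n` is the `n`-th power of `s` in a semigroup, for `n ≥ 1`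
(with the junk convention `spow s 0 = s`). -/
def spow {S : Type*} [Semigroup S] (s : S) : ℕ → S
  | 0 => s
  | 1 => s
  | n + 2 => spow s (n + 1) * s

theorem coe_spow {S : Type*} [Semigroup S] (s : S) {n : ℕ} (hn : n ≠ 0) :
    ((spow s n : S) : WithOne S) = (s : WithOne S) ^ n := by
  induction n with
  | zero => exact absurd rfl hn
  | succ m ih =>
    rcases eq_or_ne m 0 with rfl | hm
    · exact (pow_one _).symm
    · obtain ⟨k, rfl⟩ := Nat.exists_eq_succ_of_ne_zero hm
      rw [spow, WithOne.coe_mul, ih hm, ← pow_succ]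

section Monoid

variable {M : Type*} [Monoid M] {y : M} {m n : ℕ}

theorem pow_pow_eq_of_isIdempotentElem (h : IsIdempotentElem (y ^ n)) (hm : m ≠ 0) :
    (y ^ m) ^ n = y ^ n := by
  rw [← pow_mul, mul_comm, pow_mul, h.pow_eq hm]

theorem pow_succ_eq_of_isIdempotentElem (h : IsIdempotentElem (y ^ n))
    (hfix : y ^ n * y * y ^ n = y ^ n) : y ^ (n + 1) = y ^ n :=
  calc y ^ (n + 1) = y * (y ^ n * y ^ n) := by rw [h.eq, pow_succ']
    _ = y ^ n * y * y ^ n := by rw [← mul_assoc, ← pow_succ', pow_succ]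
    _ = y ^ n := hfix

end Monoid

theorem stmt_1_general {S : Type*} [Semigroup S]
    (hId : ∀ s t e : S, e * e = e → ∀ n : ℕ, 1 ≤ n →
      spow (e * s * e * t * e) n * spow (e * s * e * t * e) n = spow (e * s * e * t * e) n →
      spow (e * s * e * t * e) n * t * spow (e * s * e * t * e) n = spow (e * s * e * t * e) n)
    (x : S) (n : ℕ)
    (hx : spow x n * spow x n = spow x n) :
    spow x (n + 1) = spow x n := by
  obtain rfl | hn := eq_or_ne n 0
  · rfl
  have he : IsIdempotentElem ((x : WithOne S) ^ n) := by
    rw [IsIdempotentElem, ← coe_spow x hn, ← WithOne.coe_mul, hx]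
  set a := spow x n * x * spow x n * x * spow x n
  have ha : ((spow a n : S) : WithOne S) = (x : WithOne S) ^ n := by
    simp only [a, coe_spow _ hn, WithOne.coe_mul, ← pow_succ, ← pow_add]
    exact pow_pow_eq_of_isIdempotentElem he (by omega)
  have ha_idem : spow a n * spow a n = spow a n :=
    WithOne.coe_injective (by rw [WithOne.coe_mul, ha, he.eq])
  have hfix := congrArg ((↑) : S → WithOne S) (hId x x (spow x n) hx n (by omega) ha_idem)
  rw [WithOne.coe_mul, WithOne.coe_mul, ha] at hfix
  apply WithOne.coe_injective
  rw [coe_spow x n.succ_ne_zero, coe_spow x hn]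
  exact pow_succ_eq_of_isIdempotentElem he hfix

/-- If a finite semigroup `S` satisfies identity (1), then for every `x ∈ S` and
every `n ≥ 1` such that `x^n` is idempotent, `x^(n+1) = x^n`. -/
theorem stmt_1 {S : Type*} [Semigroup S] [Fintype S]
    (hId : ∀ s t e : S, e * e = e → ∀ n : ℕ, 1 ≤ n →
      spow (e * s * e * t * e) n * spow (e * s * e * t * e) n = spow (e * s * e * t * e) n →
      spow (e * s * e * t * e) n * t * spow (e * s * e * t * e) n = spow (e * s * e * t * e) n)
    (x : S) (n : ℕ) (hn : 1 ≤ n)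
    (hx : spow x n * spow x n = spow x n) :
    spow x (n + 1) = spow x n :=
  stmt_1_general hId x n hx
end

section
/- Let M be a monoid and a, x, y ∈ M such that a = y·a·x. If there exists n ≥ 1 with x^{n+1} = x^n, then a·x = a. -/
/-- Let `M` be a monoid and `a, x, y ∈ M` with `a = y·a·x`. If there exists `n ≥ 1`
with `x^(n+1) = x^n`, then `a·x = a`. -/
theorem stmt_3 {M : Type*} [Monoid M] (a x y : M) (ha : a = y * a * x)
    (h : ∃ n : ℕ, 1 ≤ n ∧ x ^ (n + 1) = x ^ n) :
    a * x = a := by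
  obtain ⟨n, -, hn⟩ := h
  have key : ∀ k : ℕ, a = y ^ k * a * x ^ k := by
    intro k
    induction k with
    | zero => simp
    | succ k ih =>
      calc a = y * a * x := ha
        _ = y * (y ^ k * a * x ^ k) * x := by rw [← ih]
        _ = y ^ (k + 1) * a * x ^ (k + 1) := by
            rw [pow_succ x, pow_succ' y]
            simp [mul_assoc]
  calc a * x = y ^ n * a * x ^ n * x := by rw [← key n]
    _ = y ^ n * a * x ^ (n + 1) := by rw [pow_succ, mul_assoc]
    _ = y ^ n * a * x ^ n := by rw [hn]
    _ = a := (key n).symm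
end

section
/- For every word w ∈ A⁺ with |w| > N there exist an integer h ≥ 1, nonempty words w₁, …, w_{h+1} with w = w₁⋯w_{h+1} and |w_k| ≤ N + 1 for every k, and idempotents f₁, …, f_h ∈ S such that α(w₁⋯w_k)·f_k = α(w₁⋯w_k) for every 1 ≤ k ≤ h. Consequently α(w) = α(w₁)·f₁·α(w₂)·f₂ ⋯ f_h·α(w_{h+1}). -/
lemma my_absorb_pow {M : Type*} [Monoid M] {x a : M} (h : x * a = x) :
    ∀ n : ℕ, x * a ^ n = x := by
  intro n
  induction n with
  | zero => simp
  | succ k ih => rw [pow_succ, ← mul_assoc, ih, h]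

lemma my_exists_idem_pow {M : Type*} [Monoid M] [Finite M] (a : M) :
    ∃ n : ℕ, 1 ≤ n ∧ a ^ n * a ^ n = a ^ n := by
  obtain ⟨m, n, hmn, heq⟩ := Finite.exists_ne_map_eq_of_infinite (fun k : ℕ => a ^ k)
  wlog hlt : m < n generalizing m n
  · exact this n m hmn.symm heq.symm (by omega)
  set d := n - m with hd
  have hd1 : 1 ≤ d := by omega
  have hstep : ∀ x : ℕ, m ≤ x → a ^ (x + d) = a ^ x := by
    intro x hx
    have : x + d = (x - m) + n := by omega
    rw [this, pow_add, ← heq, ← pow_add]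
    congr 1; omega
  have key : ∀ (k : ℕ) (x : ℕ), m ≤ x → a ^ (x + k * d) = a ^ x := by
    intro k
    induction k with
    | zero => simp
    | succ j ih =>
      intro x hx
      have : x + (j + 1) * d = (x + d) + j * d := by ring
      rw [this, ih (x + d) (by omega), hstep x hx]
  refine ⟨(m + 1) * d, by nlinarith, ?_⟩
  rw [← pow_add]
  exact key (m + 1) ((m + 1) * d) (by nlinarith)

/-- `altProd α ws fs` is the alternating product
`α(w₁) · f₁ · α(w₂) · f₂ ⋯ f_h · α(w_{h+1})` where `ws = [w₁, …, w_{h+1}]` and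
`fs = [f₁, …, f_h]` (junk value `1` when the lengths do not match). -/
def altProd {A M : Type*} [Monoid M] (α : List A → M) :
    List (List A) → List M → M
  | [u], [] => α u
  | u :: us, f :: fs => α u * f * altProd α us fs
  | _, _ => 1

lemma altProd_single {A M : Type*} [Monoid M] (α : List A → M) (u : List A) :
    altProd α [u] [] = α u := rfl

lemma altProd_cons {A M : Type*} [Monoid M] (α : List A → M) (u : List A)
    (us : List (List A)) (g : M) (gs : List M) :
    altProd α (u :: us) (g :: gs) = α u * g * altProd α us gs := by
  cases us <;> rfl

/-- Let `α : A* → M` be a morphism into a finite monoid, `S = α(A⁺)` and `N = |S|`.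
For every word `w ∈ A⁺` with `|w| > N` there exist `h ≥ 1`, nonempty words
`w₁, …, w_{h+1}` with `w = w₁⋯w_{h+1}` and `|w_k| ≤ N + 1` for every `k`, and
idempotents `f₁, …, f_h ∈ S` such that `α(w₁⋯w_k)·f_k = α(w₁⋯w_k)` for every
`1 ≤ k ≤ h`. Consequently `α(w) = α(w₁)·f₁·α(w₂)·f₂ ⋯ f_h·α(w_{h+1})`. -/
theorem stmt_5 {A M : Type*} [Fintype A] [Fintype M] [Monoid M]
    (α : List A → M) (hα1 : α [] = 1)
    (hαmul : ∀ u v : List A, α (u ++ v) = α u * α v)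
    (S : Set M) (hS : S = {m : M | ∃ u : List A, u ≠ [] ∧ α u = m})
    (N : ℕ) (hN : N = S.ncard)
    (w : List A) (hw : w ≠ []) (hlen : N < w.length) :
    ∃ (h : ℕ) (ws : List (List A)) (fs : List M),
      1 ≤ h ∧ ws.length = h + 1 ∧ fs.length = h ∧
      w = ws.flatten ∧
      (∀ u ∈ ws, u ≠ [] ∧ u.length ≤ N + 1) ∧
      (∀ f ∈ fs, f ∈ S ∧ f * f = f) ∧
      (∀ (k : ℕ) (hk : k < fs.length),
        α ((ws.take (k + 1)).flatten) * fs.get ⟨k, hk⟩ = α ((ws.take (k + 1)).flatten)) ∧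
      α w = altProd α ws fs := by
  -- α of a replicated word is a power
  have hrep : ∀ (n : ℕ) (m : List A), α ((List.replicate n m).flatten) = α m ^ n := by
    intro n m
    induction n with
    | zero => simpa using hα1
    | succ k ih =>
      rw [List.replicate_succ, List.flatten_cons, hαmul, ih, pow_succ']
  -- extraction step
  have hSfin : S.Finite := Set.toFinite S
  have step : ∀ v : List A, v ≠ [] → N < v.length →
      ∃ (i : ℕ) (f : M), 1 ≤ i ∧ i ≤ N ∧ f ∈ S ∧ f * f = f ∧
        α (v.take i) * f = α (v.take i) := by
    intro v hv hvlen
    have hmaps : ∀ k ∈ Finset.Icc 1 (N + 1), α (v.take k) ∈ hSfin.toFinset := by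
      intro k hk
      simp only [Finset.mem_Icc] at hk
      rw [Set.Finite.mem_toFinset, hS]
      refine ⟨v.take k, ?_, rfl⟩
      simp only [ne_eq, List.take_eq_nil_iff, not_or]
      exact ⟨by omega, hv⟩
    have hcard : hSfin.toFinset.card < (Finset.Icc 1 (N + 1)).card := by
      rw [Nat.card_Icc]
      have : S.ncard = hSfin.toFinset.card := Set.ncard_eq_toFinset_card S hSfin
      omega
    obtain ⟨i, hi, j, hj, hij, heq⟩ :=
      Finset.exists_ne_map_eq_of_card_lt_of_maps_to hcard hmaps
    wlog hlt : i < j generalizing i j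
    · exact this j hj i hi hij.symm heq.symm (by omega)
    simp only [Finset.mem_Icc] at hi hj
    -- middle word
    set m := (v.take j).drop i with hm
    have hjle : j ≤ v.length := by omega
    have hsplit : v.take j = v.take i ++ m := by
      rw [hm]
      conv_lhs => rw [← List.take_append_drop i (v.take j)]
      rw [List.take_take, min_eq_left (by omega)]
    have hmne : m ≠ [] := by
      have : i < (v.take j).length := by
        rw [List.length_take]; omega
      simp only [hm, ne_eq, List.drop_eq_nil_iff, not_le]
      omega
    have habs : α (v.take i) * α m = α (v.take i) := by
      rw [← hαmul, ← hsplit, heq]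
    obtain ⟨n, hn1, hidem⟩ := my_exists_idem_pow (α m)
    refine ⟨i, α m ^ n, by omega, by omega, ?_, hidem, my_absorb_pow habs n⟩
    rw [hS]
    refine ⟨(List.replicate n m).flatten, ?_, hrep n m⟩
    cases n with
    | zero => omega
    | succ k =>
      simp only [List.replicate_succ, List.flatten_cons, ne_eq, List.append_eq_nil_iff, not_and]
      intro h; exact absurd h hmne
  -- main strong induction on length bound
  have main : ∀ (n : ℕ) (v : List A), v.length ≤ n → v ≠ [] → N < v.length →
      ∃ (h : ℕ) (ws : List (List A)) (fs : List M),
      1 ≤ h ∧ ws.length = h + 1 ∧ fs.length = h ∧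
      v = ws.flatten ∧
      (∀ u ∈ ws, u ≠ [] ∧ u.length ≤ N + 1) ∧
      (∀ f ∈ fs, f ∈ S ∧ f * f = f) ∧
      (∀ (k : ℕ) (hk : k < fs.length),
        α ((ws.take (k + 1)).flatten) * fs.get ⟨k, hk⟩ = α ((ws.take (k + 1)).flatten)) ∧
      α v = altProd α ws fs := by
    intro n
    induction n with
    | zero => intro v hvn hv hvlen; omega
    | succ n ih =>
      intro v hvn hv hvlen
      obtain ⟨i, f, hi1, hiN, hfS, hfidem, habs⟩ := step v hv hvlen
      set w₁ := v.take i with hw₁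
      set v' := v.drop i with hv'
      have hle : i < v.length := by omega
      have hv'len : v'.length = v.length - i := by simp [hv']
      have hv'ne : v' ≠ [] := by
        simp only [hv', ne_eq, List.drop_eq_nil_iff, not_le]; omega
      have hw₁ne : w₁ ≠ [] := by
        simp only [hw₁, ne_eq, List.take_eq_nil_iff, not_or]
        exact ⟨by omega, hv⟩
      have hw₁len : w₁.length ≤ N + 1 := by
        simp only [hw₁, List.length_take]; omega
      have hvsplit : v = w₁ ++ v' := (List.take_append_drop i v).symm
      have hαv : α v = α w₁ * α v' := by rw [hvsplit, hαmul]
      rcases le_or_gt v'.length (N + 1) with hbase | hrec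
      · -- base case : h = 1
        refine ⟨1, [w₁, v'], [f], le_refl 1, rfl, rfl, by simpa using hvsplit, ?_, ?_, ?_, ?_⟩
        · intro u hu
          simp only [List.mem_cons, List.not_mem_nil, or_false] at hu
          rcases hu with rfl | rfl
          · exact ⟨hw₁ne, hw₁len⟩
          · exact ⟨hv'ne, hbase⟩
        · intro g hg
          simp only [List.mem_cons, List.not_mem_nil, or_false] at hg
          subst hg; exact ⟨hfS, hfidem⟩
        · intro k hk
          have hk0 : k = 0 := by simp only [List.length_cons, List.length_nil] at hk; omega
          subst hk0
          simpa using habs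
        · rw [altProd_cons, altProd_single, habs, hαv]
      · -- recursive case
        have hv'n : v'.length ≤ n := by omega
        obtain ⟨h', ws', fs', hh1, hwsl, hfsl, hflat, hmem, hfs, hcond, hprod⟩ :=
          ih v' hv'n hv'ne (by omega)
        refine ⟨h' + 1, w₁ :: ws', f :: fs', by omega, by simp [hwsl],
          by simp [hfsl], by simp [← hflat, hvsplit], ?_, ?_, ?_, ?_⟩
        · intro u hu
          rcases List.mem_cons.mp hu with rfl | hu
          · exact ⟨hw₁ne, hw₁len⟩
          · exact hmem u hu
        · intro g hg
          rcases List.mem_cons.mp hg with rfl | hg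
          · exact ⟨hfS, hfidem⟩
          · exact hfs g hg
        · intro k hk
          match k with
          | 0 => simpa using habs
          | k + 1 =>
            have hk' : k < fs'.length := by simpa using hk
            have := hcond k hk'
            have hget : (f :: fs').get ⟨k + 1, hk⟩ = fs'.get ⟨k, hk'⟩ := rfl
            rw [hget]
            simp only [List.take_succ_cons, List.flatten_cons, hαmul, mul_assoc, this]
        · rw [altProd_cons, ← hprod, habs, hαv]
  exact main w.length w le_rfl hw hlen
end

section
/- Let C ⊆ B, let e₁ ∈ E(S) ∪ {□}, and let t₁ ∈ β(P^C[e₁]). Let c = (e,x,f) ∈ C with e ∈ E(S), and let u', v ∈ C* be such that u'·c ∈ T^C[e₁,f] and v·c ∈ T^C[e₁,f]. Suppose there exists r ∈ M with t₁ = t₁·β(v·c)·r. Then there exists an idempotent g ∈ E(S) such that g·β(c) = β(c) and t₁·β(u')·g = t₁·β(u'). -/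
/-- The type of letters of the alphabet `B = (E(S) ∪ {□}) × M × (E(S) ∪ {□})`:
a guard is an element of `Option M`, where `none` plays the role of `□`. -/
abbrev BLetter (M : Type*) := Option M × M × Option M

/-- A guard is valid if it is `□` or an idempotent element of `S`. -/
def GuardOK {M : Type*} [Monoid M] (S : Set M) (g : Option M) : Prop :=
  ∀ m : M, g = some m → m ∈ S ∧ m * m = m

/-- The set of letters of the alphabet `B`. -/
def Bset {M : Type*} [Monoid M] (S : Set M) : Set (BLetter M) :=
  {b | GuardOK S b.1 ∧ GuardOK S b.2.2}

/-- The value `β(b)` of a letter `b = (e,s,f)`: it is `e·s·f` where a `□` guard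
is interpreted as `1`. This encodes the four cases `β((e,s,f)) = e·s·f`,
`β((□,s,f)) = s·f`, `β((e,s,□)) = e·s` and `β((□,s,□)) = s`. -/
def letterVal {M : Type*} [Monoid M] (b : BLetter M) : M :=
  b.1.getD 1 * b.2.1 * b.2.2.getD 1

/-- The morphism `β : B* → M`. -/
def betaWord {M : Type*} [Monoid M] (u : List (BLetter M)) : M :=
  (u.map letterVal).prod

/-- A word `(e₀,s₀,f₀)⋯(e_n,s_n,f_n) ∈ B*` is pseudo well-formed when
`f_i = e_{i+1} ∈ E(S)` for every `i < n` (the empty word and one-letter words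
are pseudo well-formed). -/
def PseudoWF {M : Type*} [Monoid M] (S : Set M) : List (BLetter M) → Prop
  | [] => True
  | [_] => True
  | b₁ :: b₂ :: rest =>
      (∃ g : M, g ∈ S ∧ g * g = g ∧ b₁.2.2 = some g ∧ b₂.1 = some g) ∧
      PseudoWF S (b₂ :: rest)

/-- The left guard `e₀` of a word `(e₀,s₀,f₀)⋯(e_n,s_n,f_n)` (junk on `ε`). -/
def leftGuard {M : Type*} [Monoid M] (u : List (BLetter M)) : Option M :=
  (u.headD (none, 1, none)).1

/-- The right guard `f_n` of a word `(e₀,s₀,f₀)⋯(e_n,s_n,f_n)` (junk on `ε`). -/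
def rightGuard {M : Type*} [Monoid M] (u : List (BLetter M)) : Option M :=
  (u.getLastD (none, 1, none)).2.2

/-- A word of `B*` is well-formed if it is nonempty, pseudo well-formed and both
its guards are `□`. -/
def WellFormed {M : Type*} [Monoid M] (S : Set M) (u : List (BLetter M)) : Prop :=
  u ≠ [] ∧ PseudoWF S u ∧ leftGuard u = none ∧ rightGuard u = none

/-- `T^C[e,f]`: nonempty pseudo well-formed words over `C` with left guard `e` and
right guard `f`, together with `ε` when `e = f ∈ E(S)`. -/
def Tset {M : Type*} [Monoid M] (S : Set M) (C : Set (BLetter M)) (e f : Option M) :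
    Set (List (BLetter M)) :=
  {u | (u ≠ [] ∧ (∀ b ∈ u, b ∈ C) ∧ PseudoWF S u ∧ leftGuard u = e ∧ rightGuard u = f)
    ∨ (u = [] ∧ e = f ∧ ∃ g : M, g ∈ S ∧ g * g = g ∧ e = some g)}

/-- `P^C[e]`: `{ε}` if `e = □`, and otherwise `ε` together with all nonempty pseudo
well-formed words over `C` with right guard `e`. -/
def Pset {M : Type*} [Monoid M] (S : Set M) (C : Set (BLetter M)) (e : Option M) :
    Set (List (BLetter M)) :=
  {u | u = [] ∨ (e ≠ none ∧ u ≠ [] ∧ (∀ b ∈ u, b ∈ C) ∧ PseudoWF S u ∧ rightGuard u = e)}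

/-- `S^C[f]`: `{ε}` if `f = □`, and otherwise `ε` together with all nonempty pseudo
well-formed words over `C` with left guard `f`. -/
def Sset {M : Type*} [Monoid M] (S : Set M) (C : Set (BLetter M)) (f : Option M) :
    Set (List (BLetter M)) :=
  {u | u = [] ∨ (f ≠ none ∧ u ≠ [] ∧ (∀ b ∈ u, b ∈ C) ∧ PseudoWF S u ∧ leftGuard u = f)}

lemma betaWord_append' {M : Type*} [Monoid M] (u v : List (BLetter M)) :
    betaWord (u ++ v) = betaWord u * betaWord v := by
  simp [betaWord]

lemma rightGuard_concat' {M : Type*} [Monoid M] (l : List (BLetter M)) (b : BLetter M) :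
    rightGuard (l ++ [b]) = b.2.2 := by
  simp [rightGuard]

lemma beta_right' {M : Type*} [Monoid M] {u : List (BLetter M)} (hu : u ≠ [])
    {g : M} (hg : rightGuard u = some g) (hgg : g * g = g) :
    betaWord u * g = betaWord u := by
  rcases u.eq_nil_or_concat with rfl | ⟨l, b, rfl⟩
  · exact absurd rfl hu
  · rw [List.concat_eq_append] at hg hu ⊢
    rw [rightGuard_concat'] at hg
    rw [betaWord_append']
    have : letterVal b * g = letterVal b := by
      simp [letterVal, hg, mul_assoc, hgg]
    rw [mul_assoc]
    simp [betaWord, this]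

lemma rightGuard_cons_cons {M : Type*} [Monoid M] (a b : BLetter M) (t : List (BLetter M)) :
    rightGuard (a :: b :: t) = rightGuard (b :: t) := by
  simp [rightGuard, List.getLastD]

lemma pwf_concat' {M : Type*} [Monoid M] (S : Set M) :
    ∀ (l : List (BLetter M)) (c : BLetter M), l ≠ [] → PseudoWF S (l ++ [c]) →
      ∃ g : M, g ∈ S ∧ g * g = g ∧ rightGuard l = some g ∧ c.1 = some g
  | [], _, h, _ => absurd rfl h
  | [b], c, _, hw => by
      obtain ⟨⟨g, hg1, hg2, hg3, hg4⟩, _⟩ := hw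
      exact ⟨g, hg1, hg2, by simpa [rightGuard] using hg3, hg4⟩
  | a :: b :: t, c, _, hw => by
      obtain ⟨_, hw2⟩ := hw
      obtain ⟨g, hg1, hg2, hg3, hg4⟩ :=
        pwf_concat' S (b :: t) c (by simp) hw2
      exact ⟨g, hg1, hg2, by rwa [rightGuard_cons_cons], hg4⟩

/-- Let `C ⊆ B`, `e₁ ∈ E(S) ∪ {□}` and `t₁ ∈ β(P^C[e₁])`. Let `c = (e,x,f) ∈ C`
with `e ∈ E(S)`, and let `u', v ∈ C*` be such that `u'·c ∈ T^C[e₁,f]` and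
`v·c ∈ T^C[e₁,f]`. Suppose there exists `r ∈ M` with `t₁ = t₁·β(v·c)·r`. Then
there exists an idempotent `g ∈ E(S)` such that `g·β(c) = β(c)` and
`t₁·β(u')·g = t₁·β(u')`. -/
theorem stmt_10 {A M : Type*} [Fintype A] [Fintype M] [Monoid M]
    (α : List A → M) (hα1 : α [] = 1)
    (hαmul : ∀ u v : List A, α (u ++ v) = α u * α v)
    (hαsurj : Function.Surjective α)
    (S : Set M) (hS : S = {m : M | ∃ u : List A, u ≠ [] ∧ α u = m})
    (C : Set (BLetter M)) (hC : C ⊆ Bset S)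
    (e₁ : Option M) (he₁ : GuardOK S e₁)
    (t₁ : M) (ht₁ : ∃ p ∈ Pset S C e₁, betaWord p = t₁)
    (e x : M) (heS : e ∈ S) (he : e * e = e)
    (f : Option M) (hf : GuardOK S f)
    (hc : (some e, x, f) ∈ C)
    (u' v : List (BLetter M)) (hu' : ∀ b ∈ u', b ∈ C) (hv : ∀ b ∈ v, b ∈ C)
    (huc : u' ++ [(some e, x, f)] ∈ Tset S C e₁ f)
    (hvc : v ++ [(some e, x, f)] ∈ Tset S C e₁ f)
    (r : M) (hr : t₁ = t₁ * betaWord (v ++ [(some e, x, f)]) * r) :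
    ∃ g : M, g ∈ S ∧ g * g = g ∧
      g * letterVal (some e, x, f) = letterVal (some e, x, f) ∧
      t₁ * betaWord u' * g = t₁ * betaWord u' := by
  -- S is a two-sided ideal of M
  have hmulS : ∀ s ∈ S, ∀ m : M, s * m ∈ S ∧ m * s ∈ S := by
    intro s hs m
    rw [hS] at hs ⊢
    obtain ⟨u, hune, rfl⟩ := hs
    obtain ⟨w, rfl⟩ := hαsurj m
    constructor
    · exact ⟨u ++ w, by simp [hune], hαmul u w⟩
    · refine ⟨w ++ u, ?_, hαmul w u⟩
      simp [hune]
  -- pseudo well-formedness of u' ++ [c]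
  have hucwf : PseudoWF S (u' ++ [(some e, x, f)]) := by
    rcases huc with ⟨_, _, h, _, _⟩ | ⟨h, _⟩
    · exact h
    · exact absurd h (by simp)
  by_cases hu'nil : u' = []
  · -- u' = [] : left guard of [c] equals e₁, so e₁ = some e
    subst hu'nil
    have hlg : e₁ = some e := by
      rcases huc with ⟨_, _, _, h, _⟩ | ⟨h, _⟩
      · rw [← h]; simp [leftGuard]
      · exact absurd h (by simp)
    obtain ⟨p, hp, hpt⟩ := ht₁
    by_cases hpnil : p = []
    · -- t₁ = 1; use hr to show 1 ∈ S
      subst hpnil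
      simp [betaWord] at hpt
      subst hpt
      have hcS : letterVal (some e, x, f) ∈ S := by
        have := (hmulS e heS (x * f.getD 1)).1
        simpa [letterVal, mul_assoc] using this
      have hvcS : betaWord (v ++ [(some e, x, f)]) ∈ S := by
        rw [betaWord_append']
        simp only [betaWord, List.map_cons, List.map_nil, List.prod_cons, List.prod_nil,
          mul_one]
        exact (hmulS _ hcS (betaWord v)).2
      have h1S : (1 : M) ∈ S := by
        rw [hr]
        simpa using (hmulS _ hvcS r).1
      exact ⟨1, h1S, by simp, by simp, by simp⟩
    · -- p ≠ [] : right guard of p is e₁ = some e, so t₁ * e = t₁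
      rcases hp with rfl | ⟨_, _, _, _, hrg⟩
      · exact absurd rfl hpnil
      · rw [hlg] at hrg
        have ht1e : t₁ * e = t₁ := by
          rw [← hpt]; exact beta_right' hpnil hrg he
        refine ⟨e, heS, he, ?_, ?_⟩
        · simp [letterVal, ← mul_assoc, he]
        · simp [betaWord, ht1e]
  · -- u' ≠ [] : the adjacency gives rightGuard u' = some e, so β(u')·e = β(u')
    obtain ⟨g, hg1, hg2, hg3, hg4⟩ := pwf_concat' S u' (some e, x, f) hu'nil hucwf
    have hge : g = e := by simpa using hg4.symm
    subst hge
    have hbu : betaWord u' * g = betaWord u' := beta_right' hu'nil hg3 hg2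
    refine ⟨g, hg1, hg2, ?_, ?_⟩
    · simp [letterVal, ← mul_assoc, hg2]
    · rw [mul_assoc, hbu]
end
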